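/- There exist a constant c > 0 and an integer n₀ such that for every n ≥ n₀ there exists a DFA with n states and a subset S of its state set such that S is synchronized by some word and the shortest word synchronizing S has length at least c · 2^n / √n; moreover the DFA can be chosen so that at most 2 of its states are sink states and it is transitive on the remaining states. -/

import Mathlib

/-!
Take `M` real states and two sinks, a dead state and a target state, and list the `k`-subsets
`T₀, …, T_{L-1}` of the real states, `k = ⌊M/2⌋`, `L = C(M, k)`. Letter `j` maps `T_j` onto
`T_{j+1}` (and `T_{L-1}` to the target), letter `(i, j)` maps `i` to `j`; every letter sends all
other real states to the dead state, and the letters `(i, j)` make the real states mutually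
reachable. A set containing both sinks is never synchronized. Since distinct `k`-sets are
incomparable and `k ≥ 2`, the only letter keeping `T_j ∪ {target}` synchronizable is `j`, so the
shortest word synchronizing `T₀ ∪ {target}` has length `L ≥ C(2k, k) ≥ 4^k / (2√k)`.
-/

/-- Action of a DFA transition function on a subset of states along a word. -/
def dfaRun {n m : ℕ} (δ : Fin n → Fin m → Fin n) :
    Finset (Fin n) → List (Fin m) → Finset (Fin n)
  | S, [] => S
  | S, a :: w => dfaRun δ (S.image fun q => δ q a) w

/-- A word `w` synchronizes the subset `S` in the DFA `δ`. -/
def dfaSync {n m : ℕ} (δ : Fin n → Fin m → Fin n) (S : Finset (Fin n))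
    (w : List (Fin m)) : Prop :=
  (dfaRun δ S w).card = 1

/-- `q` is a sink state of the DFA `δ`. -/
def dfaSink {n m : ℕ} (δ : Fin n → Fin m → Fin n) (q : Fin n) : Prop :=
  ∀ a, δ q a = q

instance {n m : ℕ} (δ : Fin n → Fin m → Fin n) : DecidablePred (dfaSink δ) :=
  fun _ => inferInstanceAs (Decidable (∀ _, _))

open Finset

section Run

variable {n m : ℕ} (δ : Fin n → Fin m → Fin n)

lemma dfaRun_append (S : Finset (Fin n)) (u v : List (Fin m)) :
    dfaRun δ S (u ++ v) = dfaRun δ (dfaRun δ S u) v := by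
  induction u generalizing S with
  | nil => rfl
  | cons a u ih => exact ih _

lemma dfaRun_ofFn {L : ℕ} (V : ℕ → Finset (Fin n)) (x : Fin L → Fin m)
    (hV : ∀ j : Fin L, (V j).image (δ · (x j)) = V (j + 1)) :
    dfaRun δ (V 0) (List.ofFn x) = V L := by
  induction L with
  | zero => rfl
  | succ L ih =>
    rw [List.ofFn_succ', List.concat_eq_append, dfaRun_append, ih _ fun j => hV j.castSucc]
    exact hV (Fin.last L)

lemma mem_dfaRun_of_dfaSink {q : Fin n} (hq : dfaSink δ q) {S : Finset (Fin n)} (hS : q ∈ S)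
    (w : List (Fin m)) : q ∈ dfaRun δ S w := by
  induction w generalizing S with
  | nil => exact hS
  | cons a w ih => exact ih (mem_image.2 ⟨q, hS, hq a⟩)

lemma not_dfaSync_of_dfaSink_mem {a b : Fin n} (ha : dfaSink δ a) (hb : dfaSink δ b)
    (hab : a ≠ b) {S : Finset (Fin n)} (haS : a ∈ S) (hbS : b ∈ S) (w : List (Fin m)) :
    ¬ dfaSync δ S w := fun h =>
  hab <| card_le_one.1 h.le _ (mem_dfaRun_of_dfaSink δ ha haS w) _
    (mem_dfaRun_of_dfaSink δ hb hbS w)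

lemma sub_le_length_of_dfaSync {V : ℕ → Finset (Fin n)} {L : ℕ}
    (hV : ∀ j < L, (V j).card ≠ 1)
    (hstep : ∀ j < L, ∀ a w, dfaSync δ ((V j).image (δ · a)) w →
      (V j).image (δ · a) = V (j + 1))
    {j : ℕ} {w : List (Fin m)} (h : dfaSync δ (V j) w) : L - j ≤ w.length := by
  induction w generalizing j with
  | nil =>
    have : ¬ j < L := fun hj => hV j hj h
    simp only [List.length_nil]
    omega
  | cons a w ih =>
    by_cases hj : j < L
    · have h' : dfaSync δ ((V j).image (δ · a)) w := h
      have := ih (hstep j hj a w h' ▸ h')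
      simp only [List.length_cons]
      omega
    · simp only [List.length_cons]
      omega

end Run

section ChainAutomaton

variable {M : ℕ}

def realState (q : Fin M) : Fin (M + 2) := Fin.castAdd 2 q

def deadState : Fin (M + 2) := Fin.natAdd M 0

def targetState : Fin (M + 2) := Fin.natAdd M 1

def partialLetter (D : Finset (Fin M)) (g : Fin M → Fin (M + 2)) (s : Fin (M + 2)) :
    Fin (M + 2) :=
  Fin.addCases (fun q => if q ∈ D then g q else deadState) (Fin.natAdd M) s

def config (U : Finset (Fin M)) : Finset (Fin (M + 2)) :=
  insert (targetState : Fin (M + 2)) (U.image realState)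

section PartialLetter

variable (D : Finset (Fin M)) (g : Fin M → Fin (M + 2))

lemma partialLetter_realState (q : Fin M) :
    partialLetter D g (realState q) = if q ∈ D then g q else deadState :=
  Fin.addCases_left q

lemma partialLetter_natAdd (i : Fin 2) : partialLetter D g (Fin.natAdd M i) = Fin.natAdd M i :=
  Fin.addCases_right i

lemma image_config_partialLetter {U : Finset (Fin M)} (hU : U ⊆ D) :
    (config U).image (partialLetter D g) = insert targetState (U.image g) := by
  rw [config, image_insert, targetState, partialLetter_natAdd, image_image]
  congr 1
  exact image_congr fun q hq => by
    simp only [Function.comp_apply, partialLetter_realState, if_pos (hU hq)]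

lemma targetState_mem_image_config_partialLetter (U : Finset (Fin M)) :
    targetState ∈ (config U).image (partialLetter D g) :=
  mem_image.2 ⟨targetState, mem_insert_self _ _, partialLetter_natAdd D g 1⟩

lemma deadState_mem_image_config_partialLetter {U : Finset (Fin M)} (hU : ¬ U ⊆ D) :
    deadState ∈ (config U).image (partialLetter D g) := by
  obtain ⟨q, hqU, hqD⟩ := not_subset.1 hU
  refine mem_image.2 ⟨realState q, mem_insert_of_mem (mem_image_of_mem _ hqU), ?_⟩
  rw [partialLetter_realState, if_neg hqD]

end PartialLetter

lemma realState_injective : Function.Injective (realState : Fin M → Fin (M + 2)) :=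
  Fin.castAdd_injective M 2

lemma realState_ne_natAdd (q : Fin M) (i : Fin 2) : realState q ≠ Fin.natAdd M i := by
  simp only [realState, ne_eq, Fin.ext_iff, Fin.val_castAdd, Fin.val_natAdd]
  omega

lemma deadState_ne_targetState : (deadState : Fin (M + 2)) ≠ targetState := by
  simp [deadState, targetState, Fin.ext_iff]

lemma card_config (U : Finset (Fin M)) : (config U).card = U.card + 1 := by
  rw [config, card_insert_of_notMem, card_image_of_injective _ realState_injective]
  rw [mem_image]
  rintro ⟨q, -, hq⟩
  exact realState_ne_natAdd q 1 hq

end ChainAutomaton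

section ChainDFA

variable {M : ℕ} (L : ℕ) (T : ℕ → Finset (Fin M)) (f : ℕ → Fin M → Fin M)

def chainDFA (s : Fin (M + 2)) (x : Fin (L + M * M)) : Fin (M + 2) :=
  Fin.addCases
    (fun ℓ => partialLetter (T ℓ)
      (fun q => if ℓ.val + 1 < L then realState (f ℓ q) else targetState) s)
    (fun p => partialLetter {(finProdFinEquiv.symm p).1}
      (fun _ => realState (finProdFinEquiv.symm p).2) s)
    x

def chainConfig (j : ℕ) : Finset (Fin (M + 2)) :=
  if j < L then config (T j) else {targetState}

lemma chainDFA_castAdd (ℓ : Fin L) :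
    (chainDFA L T f · (Fin.castAdd (M * M) ℓ)) = partialLetter (T ℓ)
      (fun q => if ℓ.val + 1 < L then realState (f ℓ q) else targetState) :=
  funext fun _ => Fin.addCases_left ℓ

lemma chainDFA_natAdd (i j : Fin M) :
    (chainDFA L T f · (Fin.natAdd L (finProdFinEquiv (i, j)))) =
      partialLetter {i} (fun _ => realState j) := by
  funext s
  simp only [chainDFA, Fin.addCases_right, Equiv.symm_apply_apply]

lemma dfaSink_chainDFA_natAdd (i : Fin 2) : dfaSink (chainDFA L T f) (Fin.natAdd M i) := by
  intro x
  induction x using Fin.addCases with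
  | left ℓ => exact congrFun (chainDFA_castAdd L T f ℓ) _ ▸ partialLetter_natAdd _ _ i
  | right p =>
    obtain ⟨⟨a, b⟩, rfl⟩ := finProdFinEquiv.surjective p
    exact congrFun (chainDFA_natAdd L T f a b) _ ▸ partialLetter_natAdd _ _ i

lemma dfaSink_chainDFA_iff (hM : 2 ≤ M) {s : Fin (M + 2)} :
    dfaSink (chainDFA L T f) s ↔ ∃ i, s = Fin.natAdd M i := by
  refine ⟨fun hs => ?_, fun ⟨i, hi⟩ => hi ▸ dfaSink_chainDFA_natAdd L T f i⟩
  induction s using Fin.addCases with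
  | left q =>
    have : Nontrivial (Fin M) := Fin.nontrivial_iff_two_le.2 hM
    obtain ⟨i, hiq⟩ := exists_ne q
    have h : chainDFA L T f (realState q) _ = realState q :=
      hs (Fin.natAdd L (finProdFinEquiv (i, i)))
    rw [congrFun (chainDFA_natAdd L T f i i), partialLetter_realState,
      if_neg (by simpa using hiq.symm)] at h
    exact absurd h.symm (realState_ne_natAdd q 0)
  | right i => exact ⟨i, rfl⟩

lemma card_filter_dfaSink_chainDFA_le (hM : 2 ≤ M) :
    (univ.filter fun q => dfaSink (chainDFA L T f) q).card ≤ 2 := by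
  calc (univ.filter fun q => dfaSink (chainDFA L T f) q).card
      ≤ (univ.image (Fin.natAdd M : Fin 2 → Fin (M + 2))).card := by
        refine card_le_card fun s hs => ?_
        obtain ⟨i, rfl⟩ := (dfaSink_chainDFA_iff L T f hM).1 (mem_filter.1 hs).2
        exact mem_image_of_mem _ (mem_univ i)
    _ ≤ 2 := card_image_le.trans (by simp)

lemma exists_dfaRun_chainDFA_eq (hM : 2 ≤ M) {s s' : Fin (M + 2)}
    (hs : ¬ dfaSink (chainDFA L T f) s) (hs' : ¬ dfaSink (chainDFA L T f) s') :
    ∃ w, dfaRun (chainDFA L T f) {s} w = {s'} := by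
  simp only [dfaSink_chainDFA_iff L T f hM, not_exists] at hs hs'
  induction s using Fin.addCases with
  | right i => exact absurd rfl (hs i)
  | left q =>
    induction s' using Fin.addCases with
    | right i => exact absurd rfl (hs' i)
    | left q' =>
      refine ⟨[Fin.natAdd L (finProdFinEquiv (q, q'))], ?_⟩
      show ({realState q} : Finset _).image _ = {realState q'}
      rw [chainDFA_natAdd, image_singleton, partialLetter_realState,
        if_pos (mem_singleton_self q)]

lemma image_chainConfig_castAdd (hf : ∀ j, j + 1 < L → (T j).image (f j) = T (j + 1))
    (j : Fin L) :
    (chainConfig L T j).image (chainDFA L T f · (Fin.castAdd (M * M) j)) =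
      chainConfig L T (j + 1) := by
  rw [chainDFA_castAdd, chainConfig, if_pos j.isLt, image_config_partialLetter _ _ subset_rfl,
    chainConfig]
  by_cases hj : j.val + 1 < L
  · simp only [if_pos hj, config]
    rw [← hf j hj, image_image]
    rfl
  · simp only [if_neg hj]
    ext s
    simp +contextual [mem_insert, mem_image]

variable {L T} in
lemma eq_castAdd_of_dfaSync_image_chainConfig (hT : ∀ i < L, ∀ j < L, T i ⊆ T j → i = j)
    (hT₂ : ∀ j < L, 1 < (T j).card) {j : ℕ} (hj : j < L) {x : Fin (L + M * M)}
    {w : List (Fin (L + M * M))}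
    (hw : dfaSync (chainDFA L T f) ((chainConfig L T j).image (chainDFA L T f · x)) w) :
    x = Fin.castAdd (M * M) ⟨j, hj⟩ := by
  have hdead : ∀ D g, ¬ T j ⊆ D →
      (chainDFA L T f · x) = partialLetter D g → False := fun D g hD hx => by
    rw [hx, chainConfig, if_pos hj] at hw
    exact not_dfaSync_of_dfaSink_mem _ (dfaSink_chainDFA_natAdd L T f 0)
      (dfaSink_chainDFA_natAdd L T f 1) deadState_ne_targetState
      (deadState_mem_image_config_partialLetter D g hD)
      (targetState_mem_image_config_partialLetter D g _) w hw
  induction x using Fin.addCases with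
  | left ℓ =>
    by_cases hℓ : T j ⊆ T ℓ
    · exact congrArg _ (Fin.ext (hT j hj ℓ ℓ.isLt hℓ).symm)
    · exact (hdead _ _ hℓ (chainDFA_castAdd L T f ℓ)).elim
  | right p =>
    obtain ⟨⟨a, b⟩, rfl⟩ := finProdFinEquiv.surjective p
    refine (hdead {a} _ (fun hsub => ?_) (chainDFA_natAdd L T f a b)).elim
    exact (hT₂ j hj).not_ge ((card_le_card hsub).trans (card_singleton a).le)

lemma dfaSync_chainConfig_zero (hf : ∀ j, j + 1 < L → (T j).image (f j) = T (j + 1)) :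
    dfaSync (chainDFA L T f) (chainConfig L T 0) (List.ofFn (Fin.castAdd (M * M))) := by
  rw [dfaSync, dfaRun_ofFn _ _ _ (image_chainConfig_castAdd L T f hf), chainConfig,
    if_neg (lt_irrefl L), card_singleton]

variable {L T} in
lemma le_length_of_dfaSync_chainConfig (hT : ∀ i < L, ∀ j < L, T i ⊆ T j → i = j)
    (hT₂ : ∀ j < L, 1 < (T j).card) (hf : ∀ j, j + 1 < L → (T j).image (f j) = T (j + 1))
    {w : List (Fin (L + M * M))} (hw : dfaSync (chainDFA L T f) (chainConfig L T 0) w) :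
    L ≤ w.length := by
  have hcard : ∀ j < L, (chainConfig L T j).card ≠ 1 := fun j hj => by
    rw [chainConfig, if_pos hj, card_config]
    have := hT₂ j hj
    omega
  have hstep : ∀ j < L, ∀ x w', dfaSync (chainDFA L T f)
      ((chainConfig L T j).image (chainDFA L T f · x)) w' →
      (chainConfig L T j).image (chainDFA L T f · x) = chainConfig L T (j + 1) :=
    fun j hj x w' hw' => by
      obtain rfl := eq_castAdd_of_dfaSync_image_chainConfig f hT hT₂ hj hw'
      exact image_chainConfig_castAdd L T f hf ⟨j, hj⟩
  simpa using sub_le_length_of_dfaSync _ hcard hstep hw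

end ChainDFA

theorem exists_dfa_dfaSync_length_ge_choose (M k : ℕ) (hk : 2 ≤ k) (hkM : k ≤ M) :
    ∃ (m : ℕ) (δ : Fin (M + 2) → Fin m → Fin (M + 2)) (S : Finset (Fin (M + 2))),
      (∃ w, dfaSync δ S w) ∧
      (∀ w, dfaSync δ S w → M.choose k ≤ w.length) ∧
      (univ.filter fun q => dfaSink δ q).card ≤ 2 ∧
      (∀ q q' : Fin (M + 2), ¬ dfaSink δ q → ¬ dfaSink δ q' →
        ∃ w, dfaRun δ {q} w = {q'}) := by
  set subsets := (powersetCard k (univ : Finset (Fin M))).toList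
  set L := subsets.length
  set T : ℕ → Finset (Fin M) := fun j => subsets.getD j ∅
  have hL : L = M.choose k := by simp [L, subsets]
  have hT : ∀ j (hj : j < L), T j = subsets[j] := fun j hj => List.getD_eq_getElem _ _ hj
  have hcard : ∀ j < L, (T j).card = k := fun j hj => by
    rw [hT j hj]
    exact (mem_powersetCard.1 (mem_toList.1 (List.getElem_mem hj))).2
  have hanti : ∀ i < L, ∀ j < L, T i ⊆ T j → i = j := fun i hi j hj hij => by
    have := eq_of_subset_of_card_le hij (by rw [hcard i hi, hcard j hj])
    rwa [hT i hi, hT j hj, (nodup_toList _).getElem_inj_iff] at this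
  have hmove : ∀ j, ∃ g : Fin M → Fin M, j + 1 < L → (T j).image g = T (j + 1) :=
    fun j => by
      by_cases hj : j + 1 < L
      · obtain ⟨σ, hσ⟩ := Equiv.Perm.exists_map_finset_eq (T j) (T (j + 1))
          (by rw [hcard j (by omega), hcard (j + 1) hj])
        exact ⟨σ, fun _ => by rwa [map_eq_image] at hσ⟩
      · exact ⟨id, fun h => absurd h hj⟩
  choose f hf using hmove
  have hM : 2 ≤ M := hk.trans hkM
  refine ⟨_, chainDFA L T f, chainConfig L T 0, ⟨_, dfaSync_chainConfig_zero L T f hf⟩,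
    fun w hw => hL ▸ le_length_of_dfaSync_chainConfig f hanti (fun j hj => ?_) hf hw,
    card_filter_dfaSink_chainDFA_le L T f hM,
    fun q q' => exists_dfaRun_chainDFA_eq L T f hM⟩
  rw [hcard j hj]
  omega

lemma sixteen_pow_le_four_mul_centralBinom_sq {t : ℕ} (ht : 1 ≤ t) :
    16 ^ t ≤ 4 * t * t.centralBinom ^ 2 := by
  induction t, ht using Nat.le_induction with
  | base => decide
  | succ t ht ih =>
    refine Nat.le_of_mul_le_mul_left ?_ t.succ_pos
    have hsucc := Nat.succ_mul_centralBinom_succ t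
    calc (t + 1) * 16 ^ (t + 1) ≤ 16 * (t + 1) * (4 * t * t.centralBinom ^ 2) := by
          rw [pow_succ]; nlinarith
      _ ≤ 4 * (2 * (2 * t + 1) * t.centralBinom) ^ 2 := by nlinarith [sq_nonneg t.centralBinom]
      _ = (t + 1) * (4 * (t + 1) * (t + 1).centralBinom ^ 2) := by rw [← hsucc]; ring

lemma four_pow_le_mul_choose_half_sq {M : ℕ} (hM : 2 ≤ M) :
    4 ^ (M + 2) ≤ 256 * (M + 2) * M.choose (M / 2) ^ 2 := by
  set t := M / 2
  have hcentral : t.centralBinom ≤ M.choose t := Nat.choose_le_choose t (by omega)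
  calc 4 ^ (M + 2) ≤ 4 ^ (2 * t + 3) := Nat.pow_le_pow_right (by norm_num) (by omega)
    _ = 64 * 16 ^ t := by rw [pow_add, pow_mul]; ring
    _ ≤ 64 * (4 * t * t.centralBinom ^ 2) :=
        Nat.mul_le_mul_left _ (sixteen_pow_le_four_mul_centralBinom_sq (by omega))
    _ = 256 * t * t.centralBinom ^ 2 := by ring
    _ ≤ 256 * (M + 2) * M.choose t ^ 2 := by gcongr; omega

lemma two_pow_div_sqrt_le_choose_half {M : ℕ} (hM : 2 ≤ M) :
    1 / 16 * 2 ^ (M + 2) / √((M + 2 : ℕ) : ℝ) ≤ M.choose (M / 2) := by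
  have hpos : (0 : ℝ) < (M + 2 : ℕ) := by positivity
  rw [div_le_iff₀ (Real.sqrt_pos.2 hpos)]
  have hsq : ((2 : ℝ) ^ (M + 2)) ^ 2 ≤
      (16 * (M.choose (M / 2) * √((M + 2 : ℕ) : ℝ))) ^ 2 := by
    rw [← pow_mul, mul_comm _ 2, pow_mul, mul_pow, mul_pow, Real.sq_sqrt hpos.le]
    exact_mod_cast (four_pow_le_mul_choose_half_sq hM).trans_eq (by ring)
  have := (pow_le_pow_iff_left₀ (by positivity) (by positivity) two_ne_zero).1 hsq
  linarith

theorem stmt9 :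
    ∃ c : ℝ, 0 < c ∧ ∃ n₀ : ℕ, ∀ n : ℕ, n₀ ≤ n →
      ∃ (m : ℕ) (δ : Fin n → Fin m → Fin n) (S : Finset (Fin n)),
        (∃ w, dfaSync δ S w) ∧
        (∀ w, dfaSync δ S w → c * 2 ^ n / Real.sqrt n ≤ (w.length : ℝ)) ∧
        -- at most 2 sink states
        (Finset.univ.filter fun q => dfaSink δ q).card ≤ 2 ∧
        -- transitive on the non-sink states
        (∀ q q' : Fin n, ¬ dfaSink δ q → ¬ dfaSink δ q' →
          ∃ w, dfaRun δ {q} w = {q'}) := by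
  refine ⟨1 / 16, by norm_num, 6, fun n hn => ?_⟩
  obtain ⟨M, rfl⟩ : ∃ M, n = M + 2 := ⟨n - 2, by omega⟩
  obtain ⟨m, δ, S, hsync, hlength, hsinks, htrans⟩ :=
    exists_dfa_dfaSync_length_ge_choose M (M / 2) (by omega) (Nat.div_le_self M 2)
  refine ⟨m, δ, S, hsync, fun w hw => ?_, hsinks, htrans⟩
  calc 1 / 16 * 2 ^ (M + 2) / √((M + 2 : ℕ) : ℝ) ≤ M.choose (M / 2) :=
        two_pow_div_sqrt_le_choose_half (by omega)
    _ ≤ w.length := by exact_mod_cast hlength w hw
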